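/- Let (A,∘) be a finite-dimensional alternative algebra over a field of characteristic ≠ 2, let Â = A⋉_{r_∘*, l_∘*}A* be the semidirect sum with respect to the coadjoint bimodule (A*, r_∘*, l_∘*), and let 𝓑 be the symmetric bilinear form on Â given by 𝓑(x+a*, y+b*) = ⟨a*, y⟩ + ⟨x, b*⟩. For a linear map T: A* → A, the graph {(T(a*), a*) : a* ∈ A*} is a Lagrangian subalgebra of Â with respect to 𝓑 if and only if the element r ∈ A⊗A corresponding to T via ⟨u*⊗v*, r⟩ = ⟨u*, T(v*)⟩ is a skew-symmetric solution of the alternative Yang–Baxter equation in (A,∘). -/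

import Mathlib

open TensorProduct

universe u v w

variable {k : Type u} [Field k]

section Defs

variable {M : Type v} {V : Type w} [AddCommGroup M] [Module k M] [AddCommGroup V] [Module k V]

/-- Alternative algebra: both alternative laws. -/
def IsAlt (m : M →ₗ[k] M →ₗ[k] M) : Prop :=
  (∀ x y : M, m (m x x) y = m x (m x y)) ∧ (∀ x y : M, m (m y x) x = m y (m x x))

/-- right associator -/
def rAssoc (p s : M →ₗ[k] M →ₗ[k] M) (x y z : M) : M :=
  p (p x y) z - p x (p y z + s y z)

/-- middle associator -/
def mAssoc (p s : M →ₗ[k] M →ₗ[k] M) (x y z : M) : M :=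
  p (s x y) z - s x (p y z)

/-- left associator -/
def lAssoc (p s : M →ₗ[k] M →ₗ[k] M) (x y z : M) : M :=
  s (p x y + s x y) z - s x (s y z)

/-- Pre-alternative algebra. -/
def IsPreAlt (p s : M →ₗ[k] M →ₗ[k] M) : Prop :=
  (∀ x y z : M, mAssoc p s x y z + rAssoc p s y x z = 0) ∧
  (∀ x y z : M, mAssoc p s x y z + lAssoc p s x z y = 0) ∧
  (∀ x y : M, rAssoc p s y x x = 0) ∧
  (∀ x y : M, lAssoc p s x x y = 0)

/-- Bimodule of an alternative algebra. -/
def IsAltBimod (m : M →ₗ[k] M →ₗ[k] M) (L R : M →ₗ[k] Module.End k V) : Prop :=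
  (∀ x : M, L (m x x) = L x * L x) ∧
  (∀ x : M, R (m x x) = R x * R x) ∧
  (∀ x y : M, R y * L x - L x * R y = R (m x y) - R y * R x) ∧
  (∀ x y : M, L (m y x) - L y * L x = L y * R x - R x * L y)

/-- Bimodule of a pre-alternative algebra. -/
def IsPreAltBimod (p s : M →ₗ[k] M →ₗ[k] M) (Lp Rp Ls Rs : M →ₗ[k] Module.End k V) : Prop :=
  (∀ x y : M, Ls ((p x y + s x y) + (p y x + s y x)) = Ls x * Ls y + Ls y * Ls x) ∧
  (∀ x y : M, Rs y * ((Lp x + Ls x) + (Rp x + Rs x)) = Ls x * Rs y + Rs (s x y)) ∧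
  (∀ x y : M, Rp y * Ls x + Rp y * Rp x = Ls x * Rp y + Rp (p x y + s x y)) ∧
  (∀ x y : M, Rp y * Rs x + Rp y * Lp x = Rs (p x y) + Lp x * (Rp y + Rs y)) ∧
  (∀ x y : M, Lp (s x y) + Lp (p y x) = Ls x * Lp y + Lp y * (Lp x + Ls x)) ∧
  (∀ x y : M, Ls (p y x + s y x) + Rp x * Ls y = Ls y * Ls x + Ls y * Rp x) ∧
  (∀ x y : M, Rs y * (Rp x + Rs x) + Rp x * Rs y = Rs (s x y) + Rs (p y x)) ∧
  (∀ x y : M, Rs x * (Lp y + Ls y) + Lp (s y x) = Ls y * Rs x + Ls y * Lp x) ∧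
  (∀ x y : M, Rp y * Rp x + Rp x * Rp y = Rp ((p x y + s x y) + (p y x + s y x))) ∧
  (∀ x y : M, Rp y * Lp x + Lp (p x y) = Lp x * ((Rp y + Rs y) + (Lp y + Ls y)))

/-- Dual family of endomorphisms: `(dualT L) x = (L x)^*`. -/
noncomputable def dualT (L : M →ₗ[k] Module.End k V) :
    M →ₗ[k] Module.End k (Module.Dual k V) :=
  (Module.Dual.transpose (R := k) (M := V) (M' := V)) ∘ₗ L

/-- The linear map `A* → A` associated to an element of `A ⊗ A`:
`⟨u* ⊗ v*, r⟩ = ⟨u*, T_r v*⟩`, i.e. `T_r(v*) = Σ v*(bᵢ) • aᵢ`. -/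
noncomputable def Tr : (M ⊗[k] M) →ₗ[k] Module.Dual k M →ₗ[k] M :=
  TensorProduct.lift (LinearMap.mk₂ k
    (fun a b => (Module.Dual.eval k M b).smulRight a)
    (fun a a' b => by ext f; simp)
    (fun c a b => by ext f; simp only [LinearMap.smulRight_apply, LinearMap.smul_apply,
      Module.Dual.eval_apply]; exact smul_comm _ _ _)
    (fun a b b' => by ext f; simp [add_smul])
    (fun c a b => by ext f; simp [map_smul, mul_smul]))

noncomputable def tlift (m : M →ₗ[k] M →ₗ[k] M) : M ⊗[k] M →ₗ[k] M := TensorProduct.lift m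

/-- `r₁₂ ⋄ r₁₃` : `(a⊗b)⊗(c⊗d) ↦ (a⋄c)⊗b⊗d`. -/
noncomputable def comp12_13 (m : M →ₗ[k] M →ₗ[k] M) :
    (M ⊗[k] M) ⊗[k] (M ⊗[k] M) →ₗ[k] M ⊗[k] (M ⊗[k] M) :=
  (TensorProduct.map (tlift m) LinearMap.id) ∘ₗ
    (TensorProduct.tensorTensorTensorComm k M M M M).toLinearMap

/-- `r₁₃ ⋄ r₁₂` : `(a⊗b)⊗(c⊗d) ↦ (a⋄c)⊗d⊗b`. -/
noncomputable def comp13_12 (m : M →ₗ[k] M →ₗ[k] M) :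
    (M ⊗[k] M) ⊗[k] (M ⊗[k] M) →ₗ[k] M ⊗[k] (M ⊗[k] M) :=
  (TensorProduct.map (tlift m) (TensorProduct.comm k M M).toLinearMap) ∘ₗ
    (TensorProduct.tensorTensorTensorComm k M M M M).toLinearMap

/-- `r₁₂ ⋄ r₂₃` : `(a⊗b)⊗(c⊗d) ↦ a⊗(b⋄c)⊗d`. -/
noncomputable def comp12_23 (m : M →ₗ[k] M →ₗ[k] M) :
    (M ⊗[k] M) ⊗[k] (M ⊗[k] M) →ₗ[k] M ⊗[k] (M ⊗[k] M) :=
  (TensorProduct.map LinearMap.id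
      ((TensorProduct.map (tlift m) LinearMap.id) ∘ₗ
        (TensorProduct.assoc k M M M).symm.toLinearMap)) ∘ₗ
    (TensorProduct.assoc k M M (M ⊗[k] M)).toLinearMap

/-- `r₂₃ ⋄ r₁₂` : `(a⊗b)⊗(c⊗d) ↦ c⊗(a⋄d)⊗b`. -/
noncomputable def comp23_12 (m : M →ₗ[k] M →ₗ[k] M) :
    (M ⊗[k] M) ⊗[k] (M ⊗[k] M) →ₗ[k] M ⊗[k] (M ⊗[k] M) :=
  (TensorProduct.map LinearMap.id
      ((TensorProduct.map (tlift m.flip) LinearMap.id) ∘ₗ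
        (TensorProduct.assoc k M M M).symm.toLinearMap)) ∘ₗ
    (TensorProduct.assoc k M M (M ⊗[k] M)).toLinearMap ∘ₗ
    (TensorProduct.comm k (M ⊗[k] M) (M ⊗[k] M)).toLinearMap

/-- `r₁₃ ⋄ r₂₃` : `(a⊗b)⊗(c⊗d) ↦ a⊗c⊗(b⋄d)`. -/
noncomputable def comp13_23 (m : M →ₗ[k] M →ₗ[k] M) :
    (M ⊗[k] M) ⊗[k] (M ⊗[k] M) →ₗ[k] M ⊗[k] (M ⊗[k] M) :=
  (TensorProduct.map LinearMap.id (TensorProduct.map LinearMap.id (tlift m))) ∘ₗ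
    (TensorProduct.assoc k M M (M ⊗[k] M)).toLinearMap ∘ₗ
    (TensorProduct.tensorTensorTensorComm k M M M M).toLinearMap

/-- `r₂₃ ⋄ r₁₃` : `(a⊗b)⊗(c⊗d) ↦ c⊗a⊗(b⋄d)`. -/
noncomputable def comp23_13 (m : M →ₗ[k] M →ₗ[k] M) :
    (M ⊗[k] M) ⊗[k] (M ⊗[k] M) →ₗ[k] M ⊗[k] (M ⊗[k] M) :=
  (TensorProduct.map LinearMap.id (TensorProduct.map LinearMap.id (tlift m))) ∘ₗ
    (TensorProduct.assoc k M M (M ⊗[k] M)).toLinearMap ∘ₗ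
    (TensorProduct.map (TensorProduct.comm k M M).toLinearMap LinearMap.id) ∘ₗ
    (TensorProduct.tensorTensorTensorComm k M M M M).toLinearMap

/-- The alternative Yang–Baxter expression `r₂₃∘r₁₂ − r₁₂∘r₁₃ − r₁₃∘r₂₃`. -/
noncomputable def ayb (m : M →ₗ[k] M →ₗ[k] M) (r : M ⊗[k] M) : M ⊗[k] (M ⊗[k] M) :=
  comp23_12 m (r ⊗ₜ r) - comp12_13 m (r ⊗ₜ r) - comp13_23 m (r ⊗ₜ r)

/-- PA-equations. -/
noncomputable def PA11 (p s : M →ₗ[k] M →ₗ[k] M) (r : M ⊗[k] M) : M ⊗[k] (M ⊗[k] M) :=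
  comp12_13 (p + s) (r ⊗ₜ r) - comp23_12 s (r ⊗ₜ r) - comp13_23 p (r ⊗ₜ r)

noncomputable def PA12 (p s : M →ₗ[k] M →ₗ[k] M) (r : M ⊗[k] M) : M ⊗[k] (M ⊗[k] M) :=
  comp13_12 (p + s) (r ⊗ₜ r) - comp12_23 p (r ⊗ₜ r) - comp23_13 s (r ⊗ₜ r)

noncomputable def PA21 (p s : M →ₗ[k] M →ₗ[k] M) (r : M ⊗[k] M) : M ⊗[k] (M ⊗[k] M) :=
  comp12_23 (p + s) (r ⊗ₜ r) - comp23_13 p (r ⊗ₜ r) - comp13_12 s (r ⊗ₜ r)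

noncomputable def PA22 (p s : M →ₗ[k] M →ₗ[k] M) (r : M ⊗[k] M) : M ⊗[k] (M ⊗[k] M) :=
  comp23_12 (p + s) (r ⊗ₜ r) - comp13_23 s (r ⊗ₜ r) - comp12_13 p (r ⊗ₜ r)

noncomputable def PA31 (p s : M →ₗ[k] M →ₗ[k] M) (r : M ⊗[k] M) : M ⊗[k] (M ⊗[k] M) :=
  comp13_23 (p + s) (r ⊗ₜ r) - comp12_13 s (r ⊗ₜ r) - comp23_12 p (r ⊗ₜ r)

noncomputable def PA32 (p s : M →ₗ[k] M →ₗ[k] M) (r : M ⊗[k] M) : M ⊗[k] (M ⊗[k] M) :=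
  comp23_13 (p + s) (r ⊗ₜ r) - comp13_12 p (r ⊗ₜ r) - comp12_23 s (r ⊗ₜ r)

/-- Semidirect sum product on `M × V` for an alternative algebra `M` and a bimodule `(V,L,R)`. -/
def sd (m : M →ₗ[k] M →ₗ[k] M) (L R : M →ₗ[k] Module.End k V) :
    (M × V) →ₗ[k] (M × V) →ₗ[k] (M × V) :=
  LinearMap.mk₂ k (fun x y => (m x.1 y.1, L x.1 y.2 + R y.1 x.2))
    (fun x x' y => by refine Prod.ext ?_ ?_ <;> simp [map_add] <;> abel)
    (fun c x y => by refine Prod.ext ?_ ?_ <;> simp [map_smul, smul_add])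
    (fun x y y' => by refine Prod.ext ?_ ?_ <;> simp [map_add] <;> abel)
    (fun c x y => by refine Prod.ext ?_ ?_ <;> simp [map_smul, smul_add])

end Defs

/-!
Write `T = T_r`. Isotropy of the graph of `T` for the pairing `𝓑` says
`⟨a, T b⟩ + ⟨b, T a⟩ = 0`, which is skew-symmetry of `r`; once `T` is skew, a vector
`𝓑`-orthogonal to the graph differs from a graph vector by something killed by every
functional, so the graph is Lagrangian. Closure of the graph under the semidirect product reads
`T a ∘ T b = T (r*(T a) b + l*(T b) a)`. Contracting the alternative Yang–Baxter tensor of a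
skew `r` with `a ⊗ b` in its last two slots yields the difference of the two sides of this
identity, and such contractions separate the points of `A ⊗ A ⊗ A`.
-/

section Contraction

variable {R M N P : Type*} [CommRing R] [AddCommGroup M] [Module R M]
  [AddCommGroup N] [Module R N] [AddCommGroup P] [Module R P]

noncomputable def contractLast (g : Module.Dual R N) : M ⊗[R] N →ₗ[R] M :=
  (TensorProduct.rid R M).toLinearMap ∘ₗ g.lTensor M

@[simp] lemma contractLast_tmul (g : Module.Dual R N) (x : M) (y : N) :
    contractLast g (x ⊗ₜ y) = g y • x := by
  simp [contractLast]

lemma eq_zero_of_forall_contractLast_eq_zero [Module.Free R N] {q : M ⊗[R] N}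
    (h : ∀ g : Module.Dual R N, contractLast g q = 0) : q = 0 := by
  classical
  let 𝒞 := Module.Free.chooseBasis R N
  have coord_eq (q' : M ⊗[R] N) (i : Module.Free.ChooseBasisIndex R N) :
      equivFinsuppOfBasisRight 𝒞 q' i = contractLast (𝒞.coord i) q' := by
    induction q' using TensorProduct.induction_on with
    | zero => simp
    | tmul x y => simp
    | add u v hu hv => simp [hu, hv]
  apply (equivFinsuppOfBasisRight 𝒞).injective
  ext i
  simp [coord_eq, h]

noncomputable def contractLastTwo (f : Module.Dual R N) (g : Module.Dual R P) :
    M ⊗[R] (N ⊗[R] P) →ₗ[R] M :=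
  contractLast f ∘ₗ contractLast g ∘ₗ (TensorProduct.assoc R M N P).symm.toLinearMap

@[simp] lemma contractLastTwo_tmul (f : Module.Dual R N) (g : Module.Dual R P) (x : M) (y : N)
    (z : P) : contractLastTwo f g (x ⊗ₜ (y ⊗ₜ z)) = (f y * g z) • x := by
  simp [contractLastTwo, mul_smul, smul_comm (g z)]

lemma eq_zero_of_forall_contractLastTwo_eq_zero [Module.Free R N] [Module.Free R P]
    {q : M ⊗[R] (N ⊗[R] P)}
    (h : ∀ (f : Module.Dual R N) (g : Module.Dual R P), contractLastTwo f g q = 0) : q = 0 := by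
  have : (TensorProduct.assoc R M N P).symm q = 0 :=
    eq_zero_of_forall_contractLast_eq_zero fun g =>
      eq_zero_of_forall_contractLast_eq_zero fun f => h f g
  simpa using this

end Contraction

section Tr

variable {A : Type*} [AddCommGroup A] [Module k A]

@[simp] lemma dualT_apply {V : Type*} [AddCommGroup V] [Module k V]
    (L : A →ₗ[k] Module.End k V) (x : A) (a : Module.Dual k V) (y : V) :
    dualT L x a y = a (L x y) := rfl

@[simp] lemma Tr_tmul (x y : A) (a : Module.Dual k A) : Tr (x ⊗ₜ[k] y) a = a y • x := rfl

lemma Tr_apply_eq_contractLast (q : A ⊗[k] A) (a : Module.Dual k A) :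
    Tr q a = contractLast a q := by
  induction q using TensorProduct.induction_on with
  | zero => simp
  | tmul x y => simp
  | add u v hu hv => simp [hu, hv]

lemma Tr_injective : Function.Injective (Tr : A ⊗[k] A →ₗ[k] Module.Dual k A →ₗ[k] A) :=
  (injective_iff_map_eq_zero _).mpr fun _ hq =>
    eq_zero_of_forall_contractLast_eq_zero fun a => by
      rw [← Tr_apply_eq_contractLast, hq, LinearMap.zero_apply]

lemma dual_apply_Tr_comm (q : A ⊗[k] A) (a b : Module.Dual k A) :
    b (Tr (TensorProduct.comm k A A q) a) = a (Tr q b) := by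
  induction q using TensorProduct.induction_on with
  | zero => simp
  | tmul x y => simp [mul_comm]
  | add u v hu hv => simp [hu, hv]

lemma comm_eq_neg_iff (r : A ⊗[k] A) :
    TensorProduct.comm k A A r = -r ↔ ∀ a b : Module.Dual k A, a (Tr r b) + b (Tr r a) = 0 := by
  rw [← Tr_injective.eq_iff]
  constructor
  · intro h a b
    have h' := dual_apply_Tr_comm r a b
    rw [h, map_neg, LinearMap.neg_apply, map_neg] at h'
    linear_combination -h'
  · intro h
    refine LinearMap.ext fun a => ?_
    rw [← sub_eq_zero, ← Module.forall_dual_apply_eq_zero_iff k]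
    intro b
    simp [dual_apply_Tr_comm, h a b]

end Tr

section YangBaxter

variable {A : Type*} [AddCommGroup A] [Module k A]

lemma contractLastTwo_comp12_13 (m : A →ₗ[k] A →ₗ[k] A) (a b : Module.Dual k A)
    (q₁ q₂ : A ⊗[k] A) :
    contractLastTwo a b (comp12_13 m (q₁ ⊗ₜ q₂)) = m (Tr q₁ a) (Tr q₂ b) := by
  induction q₁ using TensorProduct.induction_on with
  | zero => simp
  | add u v hu hv => simp only [add_tmul, map_add, LinearMap.add_apply, hu, hv]
  | tmul x y =>
    induction q₂ using TensorProduct.induction_on with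
    | zero => simp
    | add u v hu hv => simp only [tmul_add, map_add, LinearMap.add_apply, hu, hv]
    | tmul z w => simp [comp12_13, tlift, smul_smul, mul_comm]

lemma contractLastTwo_comp23_12 (m : A →ₗ[k] A →ₗ[k] A) (a b : Module.Dual k A)
    (q₁ q₂ : A ⊗[k] A) :
    contractLastTwo a b (comp23_12 m (q₁ ⊗ₜ q₂)) = Tr q₂ (dualT m (Tr q₁ b) a) := by
  induction q₁ using TensorProduct.induction_on with
  | zero => simp
  | add u v hu hv => simp only [add_tmul, map_add, LinearMap.add_apply, hu, hv]
  | tmul x y =>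
    induction q₂ using TensorProduct.induction_on with
    | zero => simp
    | add u v hu hv => simp only [tmul_add, map_add, LinearMap.add_apply, hu, hv]
    | tmul z w => simp [comp23_12, tlift, smul_smul, mul_comm]

lemma contractLastTwo_comp13_23 (m : A →ₗ[k] A →ₗ[k] A) (a b : Module.Dual k A)
    (q₁ q₂ : A ⊗[k] A) :
    contractLastTwo a b (comp13_23 m (q₁ ⊗ₜ q₂)) =
      Tr q₁ (dualT m.flip (Tr (TensorProduct.comm k A A q₂) a) b) := by
  induction q₁ using TensorProduct.induction_on with
  | zero => simp
  | add u v hu hv => simp only [add_tmul, map_add, LinearMap.add_apply, hu, hv]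
  | tmul x y =>
    induction q₂ using TensorProduct.induction_on with
    | zero => simp
    | add u v hu hv => simp only [tmul_add, map_add, LinearMap.add_apply, hu, hv]
    | tmul z w => simp [comp13_23, tlift, smul_smul]

lemma contractLastTwo_ayb_of_comm_eq_neg (m : A →ₗ[k] A →ₗ[k] A) {r : A ⊗[k] A}
    (hr : TensorProduct.comm k A A r = -r) (a b : Module.Dual k A) :
    contractLastTwo a b (ayb m r) =
      Tr r (dualT m.flip (Tr r a) b + dualT m (Tr r b) a) - m (Tr r a) (Tr r b) := by
  rw [ayb, map_sub, map_sub, contractLastTwo_comp23_12, contractLastTwo_comp12_13,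
    contractLastTwo_comp13_23]
  simp only [hr, map_neg, LinearMap.neg_apply, map_add]
  abel

lemma ayb_eq_zero_iff_of_comm_eq_neg (m : A →ₗ[k] A →ₗ[k] A) {r : A ⊗[k] A}
    (hr : TensorProduct.comm k A A r = -r) :
    ayb m r = 0 ↔ ∀ a b : Module.Dual k A,
      m (Tr r a) (Tr r b) = Tr r (dualT m.flip (Tr r a) b + dualT m (Tr r b) a) := by
  constructor
  · intro h a b
    have h' := contractLastTwo_ayb_of_comm_eq_neg m hr a b
    rw [h, map_zero] at h'
    exact (sub_eq_zero.mp h'.symm).symm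
  · intro h
    refine eq_zero_of_forall_contractLastTwo_eq_zero fun a b => ?_
    rw [contractLastTwo_ayb_of_comm_eq_neg m hr, h, sub_self]

end YangBaxter

section Graph

variable {V : Type*} [AddCommGroup V] [Module k V] (T : Module.Dual k V →ₗ[k] V)

lemma mem_range_prod_id_iff {x : V} {c : Module.Dual k V} :
    (x, c) ∈ LinearMap.range (T.prod (LinearMap.id : Module.Dual k V →ₗ[k] Module.Dual k V)) ↔
      x = T c := by
  constructor
  · rintro ⟨d, hd⟩
    obtain ⟨rfl, rfl⟩ := Prod.ext_iff.mp hd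
    rfl
  · rintro rfl
    exact ⟨c, rfl⟩

lemma range_prod_id_lagrangian_iff :
    (∀ q : V × Module.Dual k V,
        q ∈ LinearMap.range (T.prod (LinearMap.id : Module.Dual k V →ₗ[k] Module.Dual k V)) ↔
          ∀ w ∈ LinearMap.range (T.prod (LinearMap.id : Module.Dual k V →ₗ[k] Module.Dual k V)),
            q.2 w.1 + w.2 q.1 = 0) ↔
      ∀ a b : Module.Dual k V, a (T b) + b (T a) = 0 := by
  constructor
  · intro h a b
    exact (h (T a, a)).mp ⟨a, rfl⟩ (T b, b) ⟨b, rfl⟩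
  · rintro h ⟨x, c⟩
    rw [mem_range_prod_id_iff]
    constructor
    · rintro rfl _ ⟨d, rfl⟩
      exact h c d
    · intro hq
      rw [← sub_eq_zero, ← Module.forall_dual_apply_eq_zero_iff k]
      intro b
      have := hq (T b, b) ⟨b, rfl⟩
      simp only [map_sub]
      linear_combination this - h c b

lemma range_prod_id_closed_under_sd_iff (m : V →ₗ[k] V →ₗ[k] V) :
    (∀ q1 ∈ LinearMap.range (T.prod (LinearMap.id : Module.Dual k V →ₗ[k] Module.Dual k V)),
        ∀ q2 ∈ LinearMap.range (T.prod (LinearMap.id : Module.Dual k V →ₗ[k] Module.Dual k V)),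
          sd m (dualT m.flip) (dualT m) q1 q2 ∈
            LinearMap.range (T.prod (LinearMap.id : Module.Dual k V →ₗ[k] Module.Dual k V))) ↔
      ∀ a b : Module.Dual k V, m (T a) (T b) = T (dualT m.flip (T a) b + dualT m (T b) a) := by
  constructor
  · intro h a b
    exact (mem_range_prod_id_iff T).mp (h _ ⟨a, rfl⟩ _ ⟨b, rfl⟩)
  · rintro h _ ⟨a, rfl⟩ _ ⟨b, rfl⟩
    exact (mem_range_prod_id_iff T).mpr (h a b)

end Graph

theorem stmt11_general {A : Type v} [AddCommGroup A] [Module k A]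
    (m : A →ₗ[k] A →ₗ[k] A)
    (T : Module.Dual k A →ₗ[k] A) (r : A ⊗[k] A) (hr : Tr r = T) :
    ((∀ q : A × Module.Dual k A,
        q ∈ LinearMap.range (T.prod (LinearMap.id : Module.Dual k A →ₗ[k] Module.Dual k A)) ↔
          ∀ w ∈ LinearMap.range (T.prod (LinearMap.id : Module.Dual k A →ₗ[k] Module.Dual k A)),
            q.2 w.1 + w.2 q.1 = 0) ∧
      (∀ q1 ∈ LinearMap.range (T.prod (LinearMap.id : Module.Dual k A →ₗ[k] Module.Dual k A)),
        ∀ q2 ∈ LinearMap.range (T.prod (LinearMap.id : Module.Dual k A →ₗ[k] Module.Dual k A)),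
          sd m (dualT m.flip) (dualT m) q1 q2 ∈
            LinearMap.range (T.prod (LinearMap.id : Module.Dual k A →ₗ[k] Module.Dual k A)))) ↔
    (TensorProduct.comm k A A r = -r ∧ ayb m r = 0) := by
  subst hr
  rw [range_prod_id_lagrangian_iff, range_prod_id_closed_under_sd_iff, comm_eq_neg_iff]
  exact and_congr_right fun hskew =>
    (ayb_eq_zero_iff_of_comm_eq_neg m ((comm_eq_neg_iff r).mpr hskew)).symm

theorem stmt11 {A : Type v} [AddCommGroup A] [Module k A] [FiniteDimensional k A]
    (hchar : (2 : k) ≠ 0) (m : A →ₗ[k] A →ₗ[k] A) (halt : IsAlt m)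
    (T : Module.Dual k A →ₗ[k] A) (r : A ⊗[k] A) (hr : Tr r = T) :
    ((∀ q : A × Module.Dual k A,
        q ∈ LinearMap.range (T.prod (LinearMap.id : Module.Dual k A →ₗ[k] Module.Dual k A)) ↔
          ∀ w ∈ LinearMap.range (T.prod (LinearMap.id : Module.Dual k A →ₗ[k] Module.Dual k A)),
            q.2 w.1 + w.2 q.1 = 0) ∧
      (∀ q1 ∈ LinearMap.range (T.prod (LinearMap.id : Module.Dual k A →ₗ[k] Module.Dual k A)),
        ∀ q2 ∈ LinearMap.range (T.prod (LinearMap.id : Module.Dual k A →ₗ[k] Module.Dual k A)),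
          sd m (dualT m.flip) (dualT m) q1 q2 ∈
            LinearMap.range (T.prod (LinearMap.id : Module.Dual k A →ₗ[k] Module.Dual k A)))) ↔
    (TensorProduct.comm k A A r = -r ∧ ayb m r = 0) :=
  stmt11_general m T r hr
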